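/- arXiv:1506.07221 — 9 statements merged into one kernel-verified Lean document; each statement's English description precedes it below -/
import Mathlib

section
/- Let m ≥ 1. Suppose F, G : ℝ^{m+2} → ℝ^{m+2} and ψ_v, ψ_c : ℝ^{m+2} → ℝ^{m+2} are maps satisfying ψ_v ∘ G = F ∘ ψ_c and π_y ∘ ψ_v ∘ G = π_x ∘ ψ_c. Suppose X₀, Y₀, X₁, Y₁ : ℝ^{m+2} → ℝ^m, Z₀, Z₁ : ℝ^{m+2} → M_m(ℝ) and q : ℝ → ℝ^m satisfy, for all w ∈ ℝ^{m+2}: X₁(w) = X₀(ψ_c(w)) − q(π_x(ψ_c(w))); Y₁(w) = Z₀(ψ_c(w)) · (Y₀(ψ_v(w)) + Z₀(ψ_v(w)) · q(π_y(ψ_v(w)))); and Z₁(w) = Z₀(ψ_c(w)) · Z₀(ψ_v(w)). If Y₀(F(u)) + Z₀(F(u)) · X₀(u) = 0 for every u in the image of ψ_c, then Y₁(G(w)) + Z₁(G(w)) · X₁(w) = 0 for every w ∈ ℝ^{m+2}. (This is the inductive step proving that the class 𝒩 of Hénon-like maps is invariant under the renormalization operator.) -/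
/-! Since `ψ_v (G w) = F (ψ_c w)` and `π_y (ψ_v (G w)) = π_x (ψ_c w)`, the correction terms
`q (π_x (ψ_c w))` in `X₁ w` and in `Y₁ (G w)` cancel, and what remains is `Z₀ (ψ_c (G w))` applied
to the defining identity of `𝒩` for `F` at `ψ_c w`. -/

/-- Points of `ℝ^{m+2}` written as `(x, y, z)` with `x y : ℝ`, `z : Fin m → ℝ`. -/
abbrev HenonSpace (m : ℕ) : Type := ℝ × ℝ × (Fin m → ℝ)

open Matrix in
theorem Matrix.mulVec_add_mulVec_add_mul_mulVec_sub {l n R : Type*} [Fintype n] [CommRing R]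
    (A : Matrix l n R) (B : Matrix n n R) (y x q : n → R) :
    A *ᵥ (y + B *ᵥ q) + (A * B) *ᵥ (x - q) = A *ᵥ (y + B *ᵥ x) := by
  rw [← Matrix.mulVec_mulVec, ← Matrix.mulVec_add, Matrix.mulVec_sub, add_add_sub_cancel]

theorem henon_class_N_invariant_step_general {m : ℕ}
    (F G ψv ψc : HenonSpace m → HenonSpace m)
    (X₀ Y₀ X₁ Y₁ : HenonSpace m → Fin m → ℝ)
    (Z₀ Z₁ : HenonSpace m → Matrix (Fin m) (Fin m) ℝ)
    (q : ℝ → Fin m → ℝ)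
    (hcomm : ψv ∘ G = F ∘ ψc)
    (hyx : ∀ w, (ψv (G w)).2.1 = (ψc w).1)
    (hX : ∀ w, X₁ w = X₀ (ψc w) - q ((ψc w).1))
    (hY : ∀ w, Y₁ w =
      (Z₀ (ψc w)).mulVec (Y₀ (ψv w) + (Z₀ (ψv w)).mulVec (q ((ψv w).2.1))))
    (hZ : ∀ w, Z₁ w = Z₀ (ψc w) * Z₀ (ψv w))
    (hN : ∀ u ∈ Set.range ψc, Y₀ (F u) + (Z₀ (F u)).mulVec (X₀ u) = 0) :
    ∀ w, Y₁ (G w) + (Z₁ (G w)).mulVec (X₁ w) = 0 := by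
  intro w
  have hv : ψv (G w) = F (ψc w) := congrFun hcomm w
  rw [hY, hZ, hX, hyx, hv, Matrix.mulVec_add_mulVec_add_mul_mulVec_sub,
    hN (ψc w) ⟨w, rfl⟩, Matrix.mulVec_zero]

/-- The inductive step proving that the class 𝒩 of Hénon-like maps is invariant
under the renormalization operator. -/
theorem henon_class_N_invariant_step {m : ℕ} (hm : 1 ≤ m)
    (F G ψv ψc : HenonSpace m → HenonSpace m)
    (X₀ Y₀ X₁ Y₁ : HenonSpace m → Fin m → ℝ)
    (Z₀ Z₁ : HenonSpace m → Matrix (Fin m) (Fin m) ℝ)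
    (q : ℝ → Fin m → ℝ)
    (hcomm : ψv ∘ G = F ∘ ψc)
    (hyx : ∀ w, (ψv (G w)).2.1 = (ψc w).1)
    (hX : ∀ w, X₁ w = X₀ (ψc w) - q ((ψc w).1))
    (hY : ∀ w, Y₁ w =
      (Z₀ (ψc w)).mulVec (Y₀ (ψv w) + (Z₀ (ψv w)).mulVec (q ((ψv w).2.1))))
    (hZ : ∀ w, Z₁ w = Z₀ (ψc w) * Z₀ (ψv w))
    (hN : ∀ u ∈ Set.range ψc, Y₀ (F u) + (Z₀ (F u)).mulVec (X₀ u) = 0) :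
    ∀ w, Y₁ (G w) + (Z₁ (G w)).mulVec (X₁ w) = 0 :=
  henon_class_N_invariant_step_general F G ψv ψc X₀ Y₀ X₁ Y₁ Z₀ Z₁ q hcomm hyx hX hY hZ hN
end

section
/- Let D be a set, m ≥ 1. For n ≥ 0 let Y_n : D → ℝ^m and Z_n : D → M_m(ℝ), and for n ≥ 1 let ψ^n_v, ψ^n_c : D → D and q_{n−1} : ℝ → ℝ^m, where D ⊆ ℝ^{m+2} and π_y is the second coordinate projection. Suppose for all n ≥ 1 and w ∈ D: Z_n(w) = Z_{n−1}(ψ^n_c(w)) · Z_{n−1}(ψ^n_v(w)) and Y_n(w) = Z_{n−1}(ψ^n_c(w)) · [Y_{n−1}(ψ^n_v(w)) + Z_{n−1}(ψ^n_v(w)) · q_{n−1}(π_y(ψ^n_v(w)))], and suppose every matrix Z_j(u) (j ≥ 0, u ∈ D) is invertible. With Ψ^n_{k,v} = ψ^{k+1}_v ∘ ⋯ ∘ ψ^n_v (and Ψ^n_{n,v} = id), for all 0 ≤ k < n and w ∈ D: Y_n(w) = Z_n(w) · [ (Z_k(Ψ^n_{k,v}(w)))⁻¹ · Y_k(Ψ^n_{k,v}(w))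 + Σ_{i=k}^{n−1} q_i(π_y(Ψ^n_{i,v}(w))) ]. -/
/-- `iterComp ψ k j = ψ^{k+1} ∘ ψ^{k+2} ∘ ⋯ ∘ ψ^{k+j}`, so that
`Ψ^n_k = iterComp ψ k (n - k)` (and `Ψ^n_n = id`). -/
def iterComp {α : Type*} (ψ : ℕ → α → α) (k : ℕ) : ℕ → α → α
  | 0 => id
  | j + 1 => iterComp ψ k j ∘ ψ (k + j + 1)

open Finset Matrix

section iterComp

variable {α : Type*} (ψ : ℕ → α → α)

theorem iterComp_succ_apply (k j : ℕ) (w : α) :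
    iterComp ψ k (j + 1) w = iterComp ψ k j (ψ (k + j + 1) w) := rfl

theorem iterComp_sub_succ {i n : ℕ} (hi : i ≤ n) (w : α) :
    iterComp ψ i (n + 1 - i) w = iterComp ψ i (n - i) (ψ (n + 1) w) := by
  rw [show n + 1 - i = n - i + 1 by omega, iterComp_succ_apply,
    show i + (n - i) + 1 = n + 1 by omega]

theorem sum_Ico_iterComp_sub_succ {M : Type*} [AddCommMonoid M] (f : ℕ → α → M) {k n : ℕ}
    (hk : k ≤ n) (w : α) :
    ∑ i ∈ Ico k (n + 1), f i (iterComp ψ i (n + 1 - i) w)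
      = ∑ i ∈ Ico k n, f i (iterComp ψ i (n - i) (ψ (n + 1) w)) + f n (ψ (n + 1) w) := by
  rw [sum_Ico_succ_top hk, Nat.add_sub_cancel_left]
  congr 1
  exact sum_congr rfl fun i hi => by rw [iterComp_sub_succ ψ (mem_Ico.mp hi).2.le]

end iterComp

theorem eq_mulVec_inv_mulVec_add_sum_of_le {α ι R : Type*} [Fintype ι] [DecidableEq ι]
    [CommRing R] {D : Set α} {Y r : ℕ → α → ι → R} {Z : ℕ → α → Matrix ι ι R}
    {ψv ψc : ℕ → α → α} (hmv : ∀ n, Set.MapsTo (ψv (n + 1)) D D)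
    (hZ : ∀ n, ∀ w ∈ D, Z (n + 1) w = Z n (ψc (n + 1) w) * Z n (ψv (n + 1) w))
    (hY : ∀ n, ∀ w ∈ D, Y (n + 1) w = Z n (ψc (n + 1) w) *ᵥ
      (Y n (ψv (n + 1) w) + Z n (ψv (n + 1) w) *ᵥ r n (ψv (n + 1) w)))
    {k : ℕ} (hinv : ∀ u ∈ D, IsUnit (Z k u)) {n : ℕ} (hkn : k ≤ n) :
    ∀ w ∈ D, Y n w = Z n w *ᵥ ((Z k (iterComp ψv k (n - k) w))⁻¹ *ᵥ
      Y k (iterComp ψv k (n - k) w) + ∑ i ∈ Ico k n, r i (iterComp ψv i (n - i) w)) := by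
  induction n, hkn using Nat.le_induction with
  | base =>
    intro w hw
    have hdet : IsUnit (Z k w).det := (isUnit_iff_isUnit_det _).mp (hinv w hw)
    simp only [Nat.sub_self, iterComp, id, Ico_self, sum_empty, add_zero, mulVec_mulVec,
      mul_nonsing_inv _ hdet, one_mulVec]
  | succ n hkn ih =>
    intro w hw
    rw [hY n w hw, ih _ (hmv n hw), hZ n w hw, iterComp_sub_succ ψv hkn,
      sum_Ico_iterComp_sub_succ ψv r hkn, ← mulVec_add, ← mulVec_mulVec, add_assoc]

theorem henon_Yn_formula_general {m : ℕ} (D : Set (HenonSpace m))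
    (Y : ℕ → HenonSpace m → Fin m → ℝ)
    (Z : ℕ → HenonSpace m → Matrix (Fin m) (Fin m) ℝ)
    (ψv ψc : ℕ → HenonSpace m → HenonSpace m)
    (q : ℕ → ℝ → Fin m → ℝ)
    (hmv : ∀ n, Set.MapsTo (ψv (n + 1)) D D)
    (hZ : ∀ n, ∀ w ∈ D,
      Z (n + 1) w = Z n (ψc (n + 1) w) * Z n (ψv (n + 1) w))
    (hY : ∀ n, ∀ w ∈ D,
      Y (n + 1) w = (Z n (ψc (n + 1) w)).mulVec
        (Y n (ψv (n + 1) w)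
          + (Z n (ψv (n + 1) w)).mulVec (q n ((ψv (n + 1) w).2.1))))
    (hinv : ∀ j : ℕ, ∀ u ∈ D, IsUnit (Z j u)) :
    ∀ k n : ℕ, k < n → ∀ w ∈ D,
      Y n w = (Z n w).mulVec
        (((Z k (iterComp ψv k (n - k) w))⁻¹).mulVec (Y k (iterComp ψv k (n - k) w))
          + ∑ i ∈ Finset.Ico k n, q i ((iterComp ψv i (n - i) w).2.1)) :=
  fun k _ hkn => eq_mulVec_inv_mulVec_add_sum_of_le (Y := Y) (Z := Z) (ψc := ψc)
    (r := fun i u => q i u.2.1) hmv hZ hY (hinv k) hkn.le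

/-- Exact formula relating `Y_n, Z_n` with `Y_k, Z_k` (Lemma 4.3 of the paper). -/
theorem henon_Yn_formula {m : ℕ} (hm : 1 ≤ m) (D : Set (HenonSpace m))
    (Y : ℕ → HenonSpace m → Fin m → ℝ)
    (Z : ℕ → HenonSpace m → Matrix (Fin m) (Fin m) ℝ)
    (ψv ψc : ℕ → HenonSpace m → HenonSpace m)
    (q : ℕ → ℝ → Fin m → ℝ)
    (hmv : ∀ n, Set.MapsTo (ψv (n + 1)) D D)
    (hmc : ∀ n, Set.MapsTo (ψc (n + 1)) D D)
    (hZ : ∀ n, ∀ w ∈ D,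
      Z (n + 1) w = Z n (ψc (n + 1) w) * Z n (ψv (n + 1) w))
    (hY : ∀ n, ∀ w ∈ D,
      Y (n + 1) w = (Z n (ψc (n + 1) w)).mulVec
        (Y n (ψv (n + 1) w)
          + (Z n (ψv (n + 1) w)).mulVec (q n ((ψv (n + 1) w).2.1))))
    (hinv : ∀ j : ℕ, ∀ u ∈ D, IsUnit (Z j u)) :
    ∀ k n : ℕ, k < n → ∀ w ∈ D,
      Y n w = (Z n w).mulVec
        (((Z k (iterComp ψv k (n - k) w))⁻¹).mulVec (Y k (iterComp ψv k (n - k) w))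
          + ∑ i ∈ Finset.Ico k n, q i ((iterComp ψv i (n - i) w).2.1)) :=
  henon_Yn_formula_general D Y Z ψv ψc q hmv hZ hY hinv
end

section
/- Let m ≥ 1 and N ≥ 1. Suppose for all 0 ≤ k < n ≤ N we are given real numbers α_{n,k} and σ_{n,k} ≠ 0, t_{n,k} ∈ ℝ, row vectors u_{n,k} ∈ ℝ^m and column vectors d_{n,k} ∈ ℝ^m, and form the (m+2)×(m+2) block matrix D^n_k = [[α_{n,k}, σ_{n,k} t_{n,k}, σ_{n,k} u_{n,k}], [0, σ_{n,k}, 0], [0, σ_{n,k} d_{n,k}, σ_{n,k} I_m]]. If D^n_k = D^m_k · D^n_m for all k < m < n ≤ N, then for all 0 ≤ k < n ≤ N (with the conventions d_{n,n} = 0 and empty products equal to 1): σ_{n,k} = σ_{m,k}·σ_{n,m} and α_{n,k} = α_{m,k}·α_{n,m} for k < m < n; d_{n,k} = Σ_{i=k}^{n−1} d_{i+1,i}; u_{n,k} = Σ_{i=k}^{n−1} (∏_{j=k}^{i−1} α_{j+1,j}/σ_{j+1,j}) · u_{i+1,i}; t_{n,k} = Σ_{i=k}^{n−1} (∏_{j=k}^{i−1}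 α_{j+1,j}/σ_{j+1,j}) · (t_{i+1,i} + u_{i+1,i} · d_{n,i+1}); and t_{n,k} − u_{n,k} · d_{n,k} = Σ_{i=k}^{n−1} (∏_{j=k}^{i−1} α_{j+1,j}/σ_{j+1,j}) · (t_{i+1,i} − u_{i+1,i} · d_{i+1,k}). -/
def henonBlockMatrix (m : ℕ) (a s t : ℝ) (u d : Fin m → ℝ) :
    Matrix (Fin 1 ⊕ Fin 1 ⊕ Fin m) (Fin 1 ⊕ Fin 1 ⊕ Fin m) ℝ :=
  fun i j =>
    match i, j with
    | .inl _, .inl _ => a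
    | .inl _, .inr (.inl _) => s * t
    | .inl _, .inr (.inr i') => s * u i'
    | .inr (.inl _), .inl _ => 0
    | .inr (.inl _), .inr (.inl _) => s
    | .inr (.inl _), .inr (.inr _) => 0
    | .inr (.inr _), .inl _ => 0
    | .inr (.inr i'), .inr (.inl _) => s * d i'
    | .inr (.inr i'), .inr (.inr j') => if i' = j' then s else 0


/-!
Multiplying out the block matrices, the cocycle relation `D^n_k = D^l_k D^n_l` says exactly that
`σ` and `α` are multiplicative, `d` is an additive cocycle, and `u`, `t` are cocycles twisted by
`α_{l,k} / σ_{l,k}`. Taking `l = k + 1` turns these into backward recurrences in `k`, which unroll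
to the stated sums. For the last formula, substitute `d_{n,k} = d_{i+1,k} + d_{n,i+1}` in the
`i`-th term of `u_{n,k} · d_{n,k}`.
-/

open Finset Matrix

theorem henonBlockMatrix_mul {m : ℕ} {a₁ s₁ t₁ a₂ s₂ t₂ : ℝ} {u₁ d₁ u₂ d₂ : Fin m → ℝ}
    (hs₁ : s₁ ≠ 0) :
    henonBlockMatrix m a₁ s₁ t₁ u₁ d₁ * henonBlockMatrix m a₂ s₂ t₂ u₂ d₂
      = henonBlockMatrix m (a₁ * a₂) (s₁ * s₂) (a₁ / s₁ * t₂ + t₁ + u₁ ⬝ᵥ d₂)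
          ((a₁ / s₁) • u₂ + u₁) (d₁ + d₂) := by
  ext (i | i | i) (j | j | j) <;>
    simp [henonBlockMatrix, mul_apply, Fintype.sum_sum_type, dotProduct, mul_add, mul_sum]
  all_goals field_simp
  ring

theorem henonBlockMatrix_eq_iff {m : ℕ} {a s t a' s' t' : ℝ} {u d u' d' : Fin m → ℝ}
    (hs : s ≠ 0) :
    henonBlockMatrix m a s t u d = henonBlockMatrix m a' s' t' u' d'
      ↔ a = a' ∧ s = s' ∧ t = t' ∧ u = u' ∧ d = d' := by
  refine ⟨fun h => ?_, by rintro ⟨rfl, rfl, rfl, rfl, rfl⟩; rfl⟩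
  have entry := fun i j => congrFun (congrFun h i) j
  obtain rfl : s = s' := entry (.inr (.inl 0)) (.inr (.inl 0))
  exact ⟨entry (.inl 0) (.inl 0), rfl, mul_left_cancel₀ hs (entry (.inl 0) (.inr (.inl 0))),
    funext fun i => mul_left_cancel₀ hs (entry (.inl 0) (.inr (.inr i))),
    funext fun i => mul_left_cancel₀ hs (entry (.inr (.inr i)) (.inr (.inl 0)))⟩

theorem eq_sum_Ico_prod_smul_of_recurrence {R M : Type*} [CommSemiring R] [AddCommMonoid M]
    [Module R M] {c : ℕ → R} {b x : ℕ → M} {n : ℕ}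
    (hstep : ∀ k, k + 1 < n → x k = c k • x (k + 1) + b k) (hlast : ∀ k, k + 1 = n → x k = b k)
    {k : ℕ} (hk : k < n) : x k = ∑ i ∈ Ico k n, (∏ j ∈ Ico k i, c j) • b i := by
  obtain ⟨g, hg⟩ := Nat.exists_eq_add_of_lt hk
  induction g generalizing k with
  | zero => simp [hg, hlast k hg.symm]
  | succ g ih =>
    rw [hstep k (by omega), ih (k := k + 1) (by omega) (by omega), sum_eq_sum_Ico_succ_bot hk,
      smul_sum, Ico_self, prod_empty, one_smul, add_comm]
    congr 1
    refine sum_congr rfl fun i hi => ?_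
    rw [smul_smul, ← prod_eq_prod_Ico_succ_bot (mem_Ico.1 hi).1]

section Cocycle

variable {N : ℕ}

theorem eq_sum_Ico_of_add_cocycle {M : Type*} [AddCommMonoid M] {d : ℕ → ℕ → M}
    (hd : ∀ k l n, k < l → l < n → n ≤ N → d n k = d l k + d n l)
    {k n : ℕ} (hkn : k < n) (hn : n ≤ N) : d n k = ∑ i ∈ Ico k n, d (i + 1) i := by
  simpa using eq_sum_Ico_prod_smul_of_recurrence (c := fun _ => (1 : ℕ)) (x := d n)
    (fun k hk => by rw [one_smul, add_comm]; exact hd k (k + 1) n k.lt_succ_self hk hn)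
    (fun k hk => by rw [← hk]) hkn

theorem eq_sum_Ico_of_twisted_cocycle {𝕜 M : Type*} [Field 𝕜] [AddCommMonoid M] [Module 𝕜 M]
    {a s : ℕ → ℕ → 𝕜} {u : ℕ → ℕ → M}
    (hu : ∀ k l n, k < l → l < n → n ≤ N → u n k = (a l k / s l k) • u n l + u l k)
    {k n : ℕ} (hkn : k < n) (hn : n ≤ N) :
    u n k = ∑ i ∈ Ico k n, (∏ j ∈ Ico k i, a (j + 1) j / s (j + 1) j) • u (i + 1) i :=
  eq_sum_Ico_prod_smul_of_recurrence (x := u n)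
    (fun k hk => hu k (k + 1) n k.lt_succ_self hk hn) (fun k hk => by rw [← hk]) hkn

variable {m : ℕ} {a s t : ℕ → ℕ → ℝ} {u d : ℕ → ℕ → Fin m → ℝ}

theorem henon_t_eq_sum (hd0 : ∀ n, d n n = 0)
    (ht : ∀ k l n, k < l → l < n → n ≤ N →
      t n k = a l k / s l k * t n l + t l k + u l k ⬝ᵥ d n l)
    {k n : ℕ} (hkn : k < n) (hn : n ≤ N) :
    t n k = ∑ i ∈ Ico k n,
      (∏ j ∈ Ico k i, a (j + 1) j / s (j + 1) j) * (t (i + 1) i + u (i + 1) i ⬝ᵥ d n (i + 1)) :=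
  eq_sum_Ico_prod_smul_of_recurrence (x := t n)
    (fun k hk => by rw [smul_eq_mul, ← add_assoc]; exact ht k (k + 1) n k.lt_succ_self hk hn)
    (fun k hk => by rw [← hk, hd0, dotProduct_zero, add_zero]) hkn

theorem henon_t_sub_dotProduct_eq_sum (hd0 : ∀ n, d n n = 0)
    (hd : ∀ k l n, k < l → l < n → n ≤ N → d n k = d l k + d n l)
    {k n : ℕ} (hn : n ≤ N)
    (hu : u n k = ∑ i ∈ Ico k n, (∏ j ∈ Ico k i, a (j + 1) j / s (j + 1) j) • u (i + 1) i)
    (ht : t n k = ∑ i ∈ Ico k n,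
      (∏ j ∈ Ico k i, a (j + 1) j / s (j + 1) j) * (t (i + 1) i + u (i + 1) i ⬝ᵥ d n (i + 1))) :
    t n k - u n k ⬝ᵥ d n k = ∑ i ∈ Ico k n,
      (∏ j ∈ Ico k i, a (j + 1) j / s (j + 1) j) * (t (i + 1) i - u (i + 1) i ⬝ᵥ d (i + 1) k) := by
  rw [ht, hu, sum_dotProduct, ← sum_sub_distrib]
  refine sum_congr rfl fun i hi => ?_
  obtain ⟨hki, hin⟩ := mem_Ico.1 hi
  have hsplit : d n k = d (i + 1) k + d n (i + 1) := by
    rcases (Nat.succ_le_of_lt hin).lt_or_eq with hlt | rfl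
    · exact hd k (i + 1) n (Nat.lt_succ_of_le hki) hlt hn
    · rw [hd0, add_zero]
  rw [smul_dotProduct, smul_eq_mul, hsplit, dotProduct_add]
  ring

end Cocycle

theorem henon_tip_derivative_recursion_general {m N : ℕ}
    (a s t : ℕ → ℕ → ℝ) (u d : ℕ → ℕ → Fin m → ℝ)
    (hs : ∀ k n : ℕ, k < n → n ≤ N → s n k ≠ 0)
    (hd0 : ∀ n : ℕ, d n n = 0)
    (hcocycle : ∀ k l n : ℕ, k < l → l < n → n ≤ N →
      henonBlockMatrix m (a n k) (s n k) (t n k) (u n k) (d n k)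
        = henonBlockMatrix m (a l k) (s l k) (t l k) (u l k) (d l k)
          * henonBlockMatrix m (a n l) (s n l) (t n l) (u n l) (d n l)) :
    (∀ k l n : ℕ, k < l → l < n → n ≤ N →
        s n k = s l k * s n l ∧ a n k = a l k * a n l)
    ∧ (∀ k n : ℕ, k < n → n ≤ N →
        d n k = ∑ i ∈ Finset.Ico k n, d (i + 1) i)
    ∧ (∀ k n : ℕ, k < n → n ≤ N →
        u n k = ∑ i ∈ Finset.Ico k n,
          (∏ j ∈ Finset.Ico k i, a (j + 1) j / s (j + 1) j) • u (i + 1) i)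
    ∧ (∀ k n : ℕ, k < n → n ≤ N →
        t n k = ∑ i ∈ Finset.Ico k n,
          (∏ j ∈ Finset.Ico k i, a (j + 1) j / s (j + 1) j)
            * (t (i + 1) i + ∑ x, u (i + 1) i x * d n (i + 1) x))
    ∧ (∀ k n : ℕ, k < n → n ≤ N →
        t n k - ∑ x, u n k x * d n k x = ∑ i ∈ Finset.Ico k n,
          (∏ j ∈ Finset.Ico k i, a (j + 1) j / s (j + 1) j)
            * (t (i + 1) i - ∑ x, u (i + 1) i x * d (i + 1) k x)) := by
  have entries : ∀ k l n, k < l → l < n → n ≤ N →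
      a n k = a l k * a n l ∧ s n k = s l k * s n l
        ∧ t n k = a l k / s l k * t n l + t l k + u l k ⬝ᵥ d n l
        ∧ u n k = (a l k / s l k) • u n l + u l k ∧ d n k = d l k + d n l :=
    fun k l n hkl hln hn => (henonBlockMatrix_eq_iff (hs k n (hkl.trans hln) hn)).1 <|
      (hcocycle k l n hkl hln hn).trans (henonBlockMatrix_mul (hs k l hkl (hln.le.trans hn)))
  have hd := fun k l n hkl hln hn => (entries k l n hkl hln hn).2.2.2.2
  have hu := fun k n (hkn : k < n) (hn : n ≤ N) => eq_sum_Ico_of_twisted_cocycle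
    (fun k l n hkl hln hn => (entries k l n hkl hln hn).2.2.2.1) hkn hn
  have ht := fun k n (hkn : k < n) (hn : n ≤ N) => henon_t_eq_sum hd0
    (fun k l n hkl hln hn => (entries k l n hkl hln hn).2.2.1) hkn hn
  refine ⟨fun k l n hkl hln hn => ?_, fun k n hkn hn => eq_sum_Ico_of_add_cocycle hd hkn hn, hu, ht,
    fun k n hkn hn => henon_t_sub_dotProduct_eq_sum hd0 hd hn (hu k n hkn hn) (ht k n hkn hn)⟩
  obtain ⟨ha, hs, -⟩ := entries k l n hkl hln hn
  exact ⟨hs, ha⟩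

/-- Recursive formulas for the entries of the derivative of the scaling maps at the tip
(Proposition 5.1): if the block matrices `D^n_k` satisfy the cocycle relation
`D^n_k = D^l_k · D^n_l`, then `σ, α` are multiplicative and `d, u, t, t − u·d`
satisfy the stated telescoped sums. -/
theorem henon_tip_derivative_recursion {m N : ℕ} (hm : 1 ≤ m) (hN : 1 ≤ N)
    (a s t : ℕ → ℕ → ℝ) (u d : ℕ → ℕ → Fin m → ℝ)
    (hs : ∀ k n : ℕ, k < n → n ≤ N → s n k ≠ 0)
    (hd0 : ∀ n : ℕ, d n n = 0)
    (hcocycle : ∀ k l n : ℕ, k < l → l < n → n ≤ N →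
      henonBlockMatrix m (a n k) (s n k) (t n k) (u n k) (d n k)
        = henonBlockMatrix m (a l k) (s l k) (t l k) (u l k) (d l k)
          * henonBlockMatrix m (a n l) (s n l) (t n l) (u n l) (d n l)) :
    (∀ k l n : ℕ, k < l → l < n → n ≤ N →
        s n k = s l k * s n l ∧ a n k = a l k * a n l)
    ∧ (∀ k n : ℕ, k < n → n ≤ N →
        d n k = ∑ i ∈ Finset.Ico k n, d (i + 1) i)
    ∧ (∀ k n : ℕ, k < n → n ≤ N →
        u n k = ∑ i ∈ Finset.Ico k n,
          (∏ j ∈ Finset.Ico k i, a (j + 1) j / s (j + 1) j) • u (i + 1) i)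
    ∧ (∀ k n : ℕ, k < n → n ≤ N →
        t n k = ∑ i ∈ Finset.Ico k n,
          (∏ j ∈ Finset.Ico k i, a (j + 1) j / s (j + 1) j)
            * (t (i + 1) i + ∑ x, u (i + 1) i x * d n (i + 1) x))
    ∧ (∀ k n : ℕ, k < n → n ≤ N →
        t n k - ∑ x, u n k x * d n k x = ∑ i ∈ Finset.Ico k n,
          (∏ j ∈ Finset.Ico k i, a (j + 1) j / s (j + 1) j)
            * (t (i + 1) i - ∑ x, u (i + 1) i x * d (i + 1) k x)) :=
  henon_tip_derivative_recursion_general a s t u d hs hd0 hcocycle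
end

section
/- Let m ≥ 1, 0 < σ̄ < 1 and 0 < ε̄ ≤ σ̄². Suppose for all 0 ≤ k < n we are given C² functions R_{n,k} : [−1,1] → ℝ^m with R_{n,k}(0) = 0 and R'_{n,k}(0) = 0, and scalars σ_{n,n−1} with |σ_{n,n−1}| ≤ σ̄, satisfying the recursion R_{n,k}(y) = R_{n,n−1}(y) + σ_{n,n−1}⁻¹ · R_{n−1,k}(σ_{n,n−1}·y) for all k < n−1 and y ∈ [−1,1] (with σ_{n,n−1} ≠ 0), and the bound sup_{|y|≤1} ‖R''_{n,n−1}(y)‖ ≤ ε̄^{2^{n−1}} for every n ≥ 1. Then there exists a constant C > 0 depending only on σ̄ such that for all 0 ≤ k < n: sup_{|y|≤1} ‖R_{n,k}(y)‖ ≤ C·σ̄^{n−k} and sup_{|y|≤1} ‖R'_{n,k}(y)‖ ≤ C·σ̄^{n−k}. -/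
/-!
Differentiating the recursion gives `R'_{n+1,k}(y) = R'_{n+1,n}(y) + R'_{n,k}(σ_{n+1,n} y)`.
By the mean value inequality the one-step term satisfies `‖R'_{n+1,n}(y)‖ ≤ ε̄^{2^n} |y|`, and
`ε̄^{2^n} ≤ σ̄^{2n+2}`; the rescaling `y ↦ σ y` contracts the factor `|y|` by `σ̄`. Hence
`‖R'_{n,k}(y)‖ ≤ B_{n,k} |y|` with `B_{n+1,k} = σ̄^{2n+2} + σ̄ B_{n,k}`, a geometric sum bounded by
`σ̄^{n-k} / (1 - σ̄)`. A second use of the mean value inequality bounds `R_{n,k}` itself.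
-/

open Set

theorem Convex.norm_le_mul_abs_of_hasDerivAt {E : Type*} [NormedAddCommGroup E]
    [NormedSpace ℝ E] {s : Set ℝ} (hs : Convex ℝ s) (h0 : 0 ∈ s) {f f' : ℝ → E} {M : ℝ}
    (hf : ∀ x ∈ s, HasDerivAt f (f' x) x) (hbound : ∀ x ∈ s, ‖f' x‖ ≤ M) (hf0 : f 0 = 0)
    {y : ℝ} (hy : y ∈ s) : ‖f y‖ ≤ M * |y| := by
  simpa [hf0, Real.norm_eq_abs] using
    hs.norm_image_sub_le_of_norm_hasDerivWithin_le (fun x hx => (hf x hx).hasDerivWithinAt)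
      hbound h0 hy

theorem mul_mem_Icc_neg_one_one {c y : ℝ} (hc : |c| ≤ 1) (hy : y ∈ Icc (-1 : ℝ) 1) :
    c * y ∈ Icc (-1 : ℝ) 1 := by
  rw [mem_Icc, ← abs_le, abs_mul]
  exact mul_le_one₀ hc (abs_nonneg y) (abs_le.2 hy)

theorem pow_two_pow_le_pow_of_le_sq {ε s : ℝ} (hε : 0 ≤ ε) (hεs : ε ≤ s ^ 2) (hs0 : 0 ≤ s)
    (hs1 : s ≤ 1) (n : ℕ) : ε ^ 2 ^ n ≤ s ^ (2 * n + 2) :=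
  calc ε ^ 2 ^ n ≤ (s ^ 2) ^ 2 ^ n := pow_le_pow_left₀ hε hεs _
    _ = s ^ (2 * 2 ^ n) := by rw [← pow_mul]
    _ ≤ s ^ (2 * n + 2) := pow_le_pow_of_le_one hs0 hs1 (by have := n.lt_two_pow_self; omega)

section Recursion

variable {E : Type*} [NormedAddCommGroup E] [NormedSpace ℝ E]

theorem hasDerivAt_eq_add_of_eqOn_Icc {f g h f' g' h' : ℝ → E} {c : ℝ} (hc0 : c ≠ 0)
    (hc1 : |c| ≤ 1) (hfgh : EqOn f (fun x => g x + c⁻¹ • h (c * x)) (Icc (-1) 1))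
    (hf : ∀ x ∈ Icc (-1 : ℝ) 1, HasDerivAt f (f' x) x)
    (hg : ∀ x ∈ Icc (-1 : ℝ) 1, HasDerivAt g (g' x) x)
    (hh : ∀ x ∈ Icc (-1 : ℝ) 1, HasDerivAt h (h' x) x) {y : ℝ} (hy : y ∈ Icc (-1 : ℝ) 1) :
    f' y = g' y + h' (c * y) := by
  have hrescaled : HasDerivAt (fun x => h (c * x)) (c • h' (c * y)) y :=
    (hh _ (mul_mem_Icc_neg_one_one hc1 hy)).scomp y (hasDerivAt_const_mul c)
  have hsum : HasDerivWithinAt (fun x => g x + c⁻¹ • h (c * x)) (g' y + h' (c * y))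
      (Icc (-1) 1) y := by
    have := (hg y hy).add (hrescaled.const_smul c⁻¹)
    rw [smul_smul, inv_mul_cancel₀ hc0, one_smul] at this
    exact this.hasDerivWithinAt
  -- Derivatives within `[-1, 1]` are unique even at the endpoints, where the recursion
  -- is only known on one side.
  exact (uniqueDiffOn_Icc (by norm_num) y hy).eq_deriv _ (hf y hy).hasDerivWithinAt
    (hsum.congr hfgh (hfgh hy))

/-- `∑_{k ≤ j < n} s ^ (n + 1 + j)`, the solution of `B (n + 1) k = s ^ (2n + 2) + s * B n k`
with `B n n = 0`. -/
noncomputable def derivBound (s : ℝ) (n k : ℕ) : ℝ :=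
  s ^ (n + 1) * (s ^ k - s ^ n) / (1 - s)

@[simp]
theorem derivBound_self (s : ℝ) (n : ℕ) : derivBound s n n = 0 := by
  simp [derivBound]

theorem derivBound_succ {s : ℝ} (hs : s ≠ 1) (n k : ℕ) :
    derivBound s (n + 1) k = s ^ (2 * n + 2) + s * derivBound s n k := by
  have : 1 - s ≠ 0 := sub_ne_zero.2 hs.symm
  simp only [derivBound]
  field_simp
  ring

theorem derivBound_nonneg {s : ℝ} (hs0 : 0 ≤ s) (hs1 : s ≤ 1) {n k : ℕ} (hkn : k ≤ n) :
    0 ≤ derivBound s n k :=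
  div_nonneg (mul_nonneg (by positivity) (sub_nonneg.2 (pow_le_pow_of_le_one hs0 hs1 hkn)))
    (sub_nonneg.2 hs1)

theorem derivBound_le {s : ℝ} (hs0 : 0 ≤ s) (hs1 : s ≤ 1) (n k : ℕ) :
    derivBound s n k ≤ (1 - s)⁻¹ * s ^ (n - k) := by
  rw [derivBound, div_eq_inv_mul]
  gcongr
  calc s ^ (n + 1) * (s ^ k - s ^ n) ≤ s ^ (n + 1) * s ^ k := by
        gcongr; exact sub_le_self _ (by positivity)
    _ = s ^ (n + 1 + k) := by ring
    _ ≤ s ^ (n - k) := pow_le_pow_of_le_one hs0 hs1 (by omega)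

variable {R R' : ℕ → ℕ → ℝ → E} {σ : ℕ → ℝ} {s : ℝ}

theorem norm_deriv_le_derivBound_mul_abs (hs0 : 0 ≤ s) (hs1 : s < 1)
    (hR : ∀ n k : ℕ, ∀ y ∈ Icc (-1 : ℝ) 1, HasDerivAt (R n k) (R' n k y) y)
    (hσ0 : ∀ n, σ n ≠ 0) (hσs : ∀ n, |σ n| ≤ s)
    (hrec : ∀ k n : ℕ, k < n → ∀ y ∈ Icc (-1 : ℝ) 1,
      R (n + 1) k y = R (n + 1) n y + (σ n)⁻¹ • R n k (σ n * y))
    (hstep : ∀ n : ℕ, ∀ y ∈ Icc (-1 : ℝ) 1, ‖R' (n + 1) n y‖ ≤ s ^ (2 * n + 2) * |y|) :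
    ∀ n k : ℕ, k < n → ∀ y ∈ Icc (-1 : ℝ) 1, ‖R' n k y‖ ≤ derivBound s n k * |y| := by
  intro n
  induction n with
  | zero => intro k hk; omega
  | succ n ih =>
    intro k hk y hy
    have hσ1 : |σ n| ≤ 1 := (hσs n).trans hs1.le
    have hsplit : ‖R' (n + 1) k y‖ ≤ ‖R' (n + 1) n y‖ + s * derivBound s n k * |y| := by
      rcases Nat.lt_succ_iff_lt_or_eq.mp hk with hkn | rfl
      · rw [hasDerivAt_eq_add_of_eqOn_Icc (hσ0 n) hσ1 (hrec k n hkn) (hR (n + 1) k)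
          (hR (n + 1) n) (hR n k) hy]
        have hB := derivBound_nonneg hs0 hs1.le hkn.le
        calc ‖R' (n + 1) n y + R' n k (σ n * y)‖
            ≤ ‖R' (n + 1) n y‖ + ‖R' n k (σ n * y)‖ := norm_add_le _ _
          _ ≤ ‖R' (n + 1) n y‖ + derivBound s n k * (|σ n| * |y|) := by
            rw [← abs_mul]; gcongr; exact ih k hkn _ (mul_mem_Icc_neg_one_one hσ1 hy)
          _ ≤ ‖R' (n + 1) n y‖ + s * derivBound s n k * |y| := by
            rw [mul_left_comm, ← mul_assoc]; gcongr; exact hσs n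
      · simp
    calc ‖R' (n + 1) k y‖ ≤ s ^ (2 * n + 2) * |y| + s * derivBound s n k * |y| := by
          linarith [hstep n y hy]
      _ = derivBound s (n + 1) k * |y| := by rw [derivBound_succ hs1.ne]; ring

end Recursion

theorem henon_R_exponential_smallness_general (σb : ℝ) (hσ1 : σb < 1) :
    ∃ C > (0 : ℝ), ∀ (m : ℕ), 1 ≤ m → ∀ (εb : ℝ), 0 < εb → εb ≤ σb ^ 2 →
      ∀ (R R' R'' : ℕ → ℕ → ℝ → EuclideanSpace ℝ (Fin m)) (σstep : ℕ → ℝ),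
        (∀ n k : ℕ, ∀ y ∈ Set.Icc (-1 : ℝ) 1, HasDerivAt (R n k) (R' n k y) y) →
        (∀ n k : ℕ, ∀ y ∈ Set.Icc (-1 : ℝ) 1, HasDerivAt (R' n k) (R'' n k y) y) →
        (∀ n k : ℕ, R n k 0 = 0) →
        (∀ n k : ℕ, R' n k 0 = 0) →
        (∀ n : ℕ, σstep n ≠ 0) →
        (∀ n : ℕ, |σstep n| ≤ σb) →
        (∀ k n : ℕ, k < n → ∀ y ∈ Set.Icc (-1 : ℝ) 1,
          R (n + 1) k y = R (n + 1) n y + (σstep n)⁻¹ • R n k (σstep n * y)) →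
        (∀ n : ℕ, ∀ y ∈ Set.Icc (-1 : ℝ) 1, ‖R'' (n + 1) n y‖ ≤ εb ^ (2 ^ n)) →
        ∀ k n : ℕ, k < n → ∀ y ∈ Set.Icc (-1 : ℝ) 1,
          ‖R n k y‖ ≤ C * σb ^ (n - k) ∧ ‖R' n k y‖ ≤ C * σb ^ (n - k) := by
  refine ⟨(1 - σb)⁻¹, inv_pos.2 (sub_pos.2 hσ1), ?_⟩
  intro m _ εb hε0 hεσ R R' R'' σstep hR hR' hR0 hR'0 hσ0 hσb hrec hstep k n hkn y hy
  have hσb0 : 0 ≤ σb := (abs_nonneg _).trans (hσb 0)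
  have hI : Convex ℝ (Icc (-1 : ℝ) 1) := convex_Icc _ _
  have h0I : (0 : ℝ) ∈ Icc (-1 : ℝ) 1 := by norm_num
  have hstep' (n : ℕ) (y : ℝ) (hy : y ∈ Icc (-1 : ℝ) 1) :
      ‖R' (n + 1) n y‖ ≤ σb ^ (2 * n + 2) * |y| :=
    hI.norm_le_mul_abs_of_hasDerivAt h0I (hR' (n + 1) n)
      (fun x hx => (hstep n x hx).trans
        (pow_two_pow_le_pow_of_le_sq hε0.le hεσ hσb0 hσ1.le n)) (hR'0 _ _) hy
  have hC : 0 ≤ (1 - σb)⁻¹ * σb ^ (n - k) := by have := sub_pos.2 hσ1; positivity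
  have hderiv : ∀ y ∈ Icc (-1 : ℝ) 1, ‖R' n k y‖ ≤ (1 - σb)⁻¹ * σb ^ (n - k) := fun y hy =>
    calc ‖R' n k y‖ ≤ derivBound σb n k * |y| :=
          norm_deriv_le_derivBound_mul_abs hσb0 hσ1 hR hσ0 hσb hrec hstep' n k hkn y hy
      _ ≤ derivBound σb n k :=
          mul_le_of_le_one_right (derivBound_nonneg hσb0 hσ1.le hkn.le) (abs_le.2 hy)
      _ ≤ (1 - σb)⁻¹ * σb ^ (n - k) := derivBound_le hσb0 hσ1.le n k
  refine ⟨?_, hderiv y hy⟩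
  calc ‖R n k y‖ ≤ (1 - σb)⁻¹ * σb ^ (n - k) * |y| :=
        hI.norm_le_mul_abs_of_hasDerivAt h0I (hR n k) hderiv (hR0 n k) hy
    _ ≤ (1 - σb)⁻¹ * σb ^ (n - k) := mul_le_of_le_one_right hC (abs_le.2 hy)

/-- Exponential smallness of the nonlinear parts `R_{n,k}` and their derivatives
(Proposition 5.2): the constant `C` depends only on `σ̄`. -/
theorem henon_R_exponential_smallness (σb : ℝ) (hσ0 : 0 < σb) (hσ1 : σb < 1) :
    ∃ C > (0 : ℝ), ∀ (m : ℕ), 1 ≤ m → ∀ (εb : ℝ), 0 < εb → εb ≤ σb ^ 2 →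
      ∀ (R R' R'' : ℕ → ℕ → ℝ → EuclideanSpace ℝ (Fin m)) (σstep : ℕ → ℝ),
        (∀ n k : ℕ, ∀ y ∈ Set.Icc (-1 : ℝ) 1, HasDerivAt (R n k) (R' n k y) y) →
        (∀ n k : ℕ, ∀ y ∈ Set.Icc (-1 : ℝ) 1, HasDerivAt (R' n k) (R'' n k y) y) →
        (∀ n k : ℕ, R n k 0 = 0) →
        (∀ n k : ℕ, R' n k 0 = 0) →
        (∀ n : ℕ, σstep n ≠ 0) →
        (∀ n : ℕ, |σstep n| ≤ σb) →
        (∀ k n : ℕ, k < n → ∀ y ∈ Set.Icc (-1 : ℝ) 1,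
          R (n + 1) k y = R (n + 1) n y + (σstep n)⁻¹ • R n k (σstep n * y)) →
        (∀ n : ℕ, ∀ y ∈ Set.Icc (-1 : ℝ) 1, ‖R'' (n + 1) n y‖ ≤ εb ^ (2 ^ n)) →
        ∀ k n : ℕ, k < n → ∀ y ∈ Set.Icc (-1 : ℝ) 1,
          ‖R n k y‖ ≤ C * σb ^ (n - k) ∧ ‖R' n k y‖ ≤ C * σb ^ (n - k) :=
  henon_R_exponential_smallness_general σb hσ1
end

section
/- Let m ≥ 1 and let k < n be integers. For k ≤ i ≤ n−1 let ψ_i : ℝ^{m+2} → ℝ^{m+2} be maps, σ_i ∈ ℝ scalars, and p_i : ℝ → ℝ^m functions such that for every w = (x,y,z): π_y(ψ_i(w)) = σ_i·y and π_z(ψ_i(w)) = σ_i·z + p_i(σ_i·y). Define Ψ^n_k = ψ_k ∘ ψ_{k+1} ∘ ⋯ ∘ ψ_{n−1}, and set σ_{i,k} = ∏_{j=k}^{i−1} σ_j (so σ_{k,k} = 1) and σ_{n,i} = ∏_{j=i}^{n−1} σ_j. Then for every w = (x,y,z): π_z(Ψ^n_k(w)) = σ_{n,k}·z + Σ_{i=k}^{n−1}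 σ_{i,k} · p_i(σ_{n,i}·y). -/
/-- `compFrom ψ k j = ψ_k ∘ ψ_{k+1} ∘ ⋯ ∘ ψ_{k+j-1}`, so that
`Ψ^n_k = compFrom ψ k (n - k)`. -/
def compFrom {α : Type*} (ψ : ℕ → α → α) : ℕ → ℕ → α → α
  | _, 0 => id
  | k, j + 1 => ψ k ∘ compFrom ψ (k + 1) j

open Finset

theorem compFrom_succ {α : Type*} (ψ : ℕ → α → α) (k j : ℕ) :
    compFrom ψ k (j + 1) = ψ k ∘ compFrom ψ (k + 1) j := rfl

section Coordinates

variable {X M E : Type*}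

theorem compFrom_apply_snd_fst [CommMonoid M] (ψ : ℕ → X × M × E → X × M × E) (σ : ℕ → M)
    {k j : ℕ} (hy : ∀ i ∈ Ico k (k + j), ∀ w, (ψ i w).2.1 = σ i * w.2.1) (w : X × M × E) :
    (compFrom ψ k j w).2.1 = (∏ i ∈ Ico k (k + j), σ i) * w.2.1 := by
  induction j generalizing k with
  | zero => simp [compFrom]
  | succ j ih =>
    have hk : k < k + (j + 1) := by omega
    have hlen : k + 1 + j = k + (j + 1) := by omega
    have htail := ih (k := k + 1) fun i hi => hy i (by grind)
    rw [hlen] at htail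
    rw [compFrom_succ, Function.comp_apply, hy k (by simp), htail,
      prod_eq_prod_Ico_succ_bot hk, mul_assoc]

theorem compFrom_apply_snd_snd [CommSemiring M] [AddCommMonoid E] [Module M E]
    (ψ : ℕ → X × M × E → X × M × E) (σ : ℕ → M) (p : ℕ → M → E) {k j : ℕ}
    (hy : ∀ i ∈ Ico k (k + j), ∀ w, (ψ i w).2.1 = σ i * w.2.1)
    (hz : ∀ i ∈ Ico k (k + j), ∀ w, (ψ i w).2.2 = σ i • w.2.2 + p i (σ i * w.2.1))
    (w : X × M × E) :
    (compFrom ψ k j w).2.2 = (∏ i ∈ Ico k (k + j), σ i) • w.2.2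
      + ∑ i ∈ Ico k (k + j), (∏ l ∈ Ico k i, σ l) • p i ((∏ l ∈ Ico i (k + j), σ l) * w.2.1) := by
  induction j generalizing k with
  | zero => simp [compFrom]
  | succ j ih =>
    have hk : k < k + (j + 1) := by omega
    have hlen : k + 1 + j = k + (j + 1) := by omega
    have hsub : ∀ i ∈ Ico (k + 1) (k + 1 + j), i ∈ Ico k (k + (j + 1)) := by grind
    have hy' := compFrom_apply_snd_fst ψ σ fun i hi => hy i (hsub i hi)
    have hz' := ih (fun i hi => hy i (hsub i hi)) (fun i hi => hz i (hsub i hi))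
    rw [hlen] at hy' hz'
    have habsorb : ∀ i ∈ Ico (k + 1) (k + (j + 1)),
        σ k • (∏ l ∈ Ico (k + 1) i, σ l) • p i ((∏ l ∈ Ico i (k + (j + 1)), σ l) * w.2.1)
          = (∏ l ∈ Ico k i, σ l) • p i ((∏ l ∈ Ico i (k + (j + 1)), σ l) * w.2.1) := by
      intro i hi
      rw [smul_smul, ← prod_eq_prod_Ico_succ_bot (by grind)]
    rw [compFrom_succ, Function.comp_apply, hz k (by simp), hz', hy', sum_eq_sum_Ico_succ_bot hk,
      Ico_self, prod_empty, one_smul, prod_eq_prod_Ico_succ_bot hk, smul_add, smul_sum,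
      sum_congr rfl habsorb, smul_smul, ← mul_assoc]
    abel

end Coordinates

theorem henon_z_coordinate_formula_general {m : ℕ} (k n : ℕ)
    (ψ : ℕ → HenonSpace m → HenonSpace m) (σ : ℕ → ℝ) (p : ℕ → ℝ → Fin m → ℝ)
    (hy : ∀ i : ℕ, k ≤ i → i ≤ n - 1 → ∀ w : HenonSpace m,
      (ψ i w).2.1 = σ i * w.2.1)
    (hz : ∀ i : ℕ, k ≤ i → i ≤ n - 1 → ∀ w : HenonSpace m,
      (ψ i w).2.2 = σ i • w.2.2 + p i (σ i * w.2.1)) :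
    ∀ w : HenonSpace m,
      (compFrom ψ k (n - k) w).2.2
        = (∏ j ∈ Finset.Ico k n, σ j) • w.2.2
          + ∑ i ∈ Finset.Ico k n,
              (∏ j ∈ Finset.Ico k i, σ j) • p i ((∏ j ∈ Finset.Ico i n, σ j) * w.2.1) := by
  intro w
  rcases le_or_gt k n with hkn | hnk
  · obtain ⟨j, rfl⟩ := Nat.exists_eq_add_of_le hkn
    rw [Nat.add_sub_cancel_left]
    exact compFrom_apply_snd_snd ψ σ p (fun i hi => hy i (mem_Ico.1 hi).1 (by grind))
      (fun i hi => hz i (mem_Ico.1 hi).1 (by grind)) w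
  · simp [Nat.sub_eq_zero_of_le hnk.le, compFrom, Ico_eq_empty_of_le hnk.le]

/-- Closed formula for the `z`-coordinate of the composed scaling map `Ψ^n_k`
(Proposition 5.3, equations (5.8)–(5.9)). -/
theorem henon_z_coordinate_formula {m : ℕ} (hm : 1 ≤ m) (k n : ℕ) (hkn : k < n)
    (ψ : ℕ → HenonSpace m → HenonSpace m) (σ : ℕ → ℝ) (p : ℕ → ℝ → Fin m → ℝ)
    (hy : ∀ i : ℕ, k ≤ i → i ≤ n - 1 → ∀ w : HenonSpace m,
      (ψ i w).2.1 = σ i * w.2.1)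
    (hz : ∀ i : ℕ, k ≤ i → i ≤ n - 1 → ∀ w : HenonSpace m,
      (ψ i w).2.2 = σ i • w.2.2 + p i (σ i * w.2.1)) :
    ∀ w : HenonSpace m,
      (compFrom ψ k (n - k) w).2.2
        = (∏ j ∈ Finset.Ico k n, σ j) • w.2.2
          + ∑ i ∈ Finset.Ico k n,
              (∏ j ∈ Finset.Ico k i, σ j) • p i ((∏ j ∈ Finset.Ico i n, σ j) * w.2.1) :=
  henon_z_coordinate_formula_general k n ψ σ p hy hz
end

section
/- In the setting of the closed formula π_z(Ψ^n_k(w)) = σ_{n,k}·z + Σ_{i=k}^{n−1} σ_{i,k}·p_i(σ_{n,i}·y) (maps ψ_i with π_y(ψ_i(w)) = σ_i·y, π_z(ψ_i(w)) = σ_i·z + p_i(σ_i·y), Ψ^n_k = ψ_k ∘ ⋯ ∘ ψ_{n−1}, σ_{i,k} = ∏_{j=k}^{i−1}σ_j, σ_{n,i} = ∏_{j=i}^{n−1}σ_j), suppose additionally that each p_i is differentiable with derivative q_i, that σ_{n,k} = ∏_{j=k}^{n−1}σ_j ≠ 0, and that there are d_{n,k} ∈ ℝ^m and a differentiable R_{n,k}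 : ℝ → ℝ^m with π_z(Ψ^n_k(x,y,z)) = σ_{n,k}·[d_{n,k}·y + z + R_{n,k}(y)] for all (x,y,z). Then for every y ∈ ℝ: Σ_{i=k}^{n−1} q_i(σ_{n,i}·y) = d_{n,k} + R'_{n,k}(y). -/
open Finset

theorem apply_compFrom_eq_prod_mul {α M : Type*} [CommMonoid M] {ψ : ℕ → α → α}
    {π : α → M} {σ : ℕ → M} {a n : ℕ}
    (h : ∀ i ∈ Ico a n, ∀ w, π (ψ i w) = σ i * π w) (w : α) :
    π (compFrom ψ a (n - a) w) = (∏ i ∈ Ico a n, σ i) * π w := by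
  induction hj : n - a generalizing a with
  | zero => rw [Ico_eq_empty_of_le (by omega)]; simp [compFrom]
  | succ j ih =>
    have ha : a < n := by omega
    have h' : ∀ i ∈ Ico (a + 1) n, ∀ w, π (ψ i w) = σ i * π w :=
      fun i hi => h i (Ico_subset_Ico_left a.le_succ hi)
    rw [compFrom, Function.comp_apply, h a (by simp [ha]), ih h' (by omega),
      prod_eq_prod_Ico_succ_bot ha, mul_assoc]

theorem compFrom_snd_snd_eq_sum {X E : Type*} [AddCommGroup E] [Module ℝ E]
    {ψ : ℕ → X × ℝ × E → X × ℝ × E} {σ : ℕ → ℝ} {p : ℕ → ℝ → E} {a n : ℕ}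
    (hy : ∀ i ∈ Ico a n, ∀ w, (ψ i w).2.1 = σ i * w.2.1)
    (hz : ∀ i ∈ Ico a n, ∀ w, (ψ i w).2.2 = σ i • w.2.2 + p i (σ i * w.2.1))
    (w : X × ℝ × E) :
    (compFrom ψ a (n - a) w).2.2 = (∏ j ∈ Ico a n, σ j) • w.2.2 +
      ∑ i ∈ Ico a n, (∏ j ∈ Ico a i, σ j) • p i ((∏ j ∈ Ico i n, σ j) * w.2.1) := by
  induction hj : n - a generalizing a with
  | zero => rw [Ico_eq_empty_of_le (by omega)]; simp [compFrom]
  | succ j ih =>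
    have ha : a < n := by omega
    have hy' : ∀ i ∈ Ico (a + 1) n, ∀ w, (ψ i w).2.1 = σ i * w.2.1 :=
      fun i hi => hy i (Ico_subset_Ico_left a.le_succ hi)
    have hz' : ∀ i ∈ Ico (a + 1) n, ∀ w, (ψ i w).2.2 = σ i • w.2.2 + p i (σ i * w.2.1) :=
      fun i hi => hz i (Ico_subset_Ico_left a.le_succ hi)
    have htail :
        ∑ i ∈ Ico (a + 1) n, (∏ j ∈ Ico a i, σ j) • p i ((∏ j ∈ Ico i n, σ j) * w.2.1) =
          σ a • ∑ i ∈ Ico (a + 1) n,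
            (∏ j ∈ Ico (a + 1) i, σ j) • p i ((∏ j ∈ Ico i n, σ j) * w.2.1) := by
      rw [smul_sum]
      refine sum_congr rfl fun i hi => ?_
      rw [prod_eq_prod_Ico_succ_bot (by simp at hi; omega), mul_smul]
    have hj' : n - (a + 1) = j := by omega
    have hY : (compFrom ψ (a + 1) j w).2.1 = (∏ j ∈ Ico (a + 1) n, σ j) * w.2.1 :=
      hj' ▸ apply_compFrom_eq_prod_mul (π := fun w => w.2.1) hy' w
    rw [compFrom, Function.comp_apply, hz a (by simp [ha]), ih hy' hz' hj', hY, ← mul_assoc,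
      ← prod_eq_prod_Ico_succ_bot ha, sum_eq_sum_Ico_succ_bot ha, Ico_self, prod_empty,
      one_smul, htail, smul_add, smul_smul, ← prod_eq_prod_Ico_succ_bot ha]
    abel

theorem hasDerivAt_sum_smul_comp_mul {ι E : Type*} [NormedAddCommGroup E] [NormedSpace ℝ E]
    (s : Finset ι) (a b : ι → ℝ) {p q : ι → ℝ → E} (hp : ∀ i x, HasDerivAt (p i) (q i x) x)
    (y : ℝ) :
    HasDerivAt (fun y => ∑ i ∈ s, a i • p i (b i * y))
      (∑ i ∈ s, (a i * b i) • q i (b i * y)) y := by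
  refine HasDerivAt.fun_sum fun i _ => ?_
  have hlin : HasDerivAt (fun y => b i * y) (b i) y := by
    simpa using (hasDerivAt_id y).const_mul (b i)
  rw [mul_smul]
  exact ((hp i (b i * y)).scomp y hlin).const_smul (a i)

theorem henon_sum_q_eq_d_add_R'_general {m : ℕ} (k n : ℕ)
    (ψ : ℕ → HenonSpace m → HenonSpace m) (σ : ℕ → ℝ) (p q : ℕ → ℝ → Fin m → ℝ)
    (hy : ∀ i : ℕ, k ≤ i → i ≤ n - 1 → ∀ w : HenonSpace m,
      (ψ i w).2.1 = σ i * w.2.1)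
    (hz : ∀ i : ℕ, k ≤ i → i ≤ n - 1 → ∀ w : HenonSpace m,
      (ψ i w).2.2 = σ i • w.2.2 + p i (σ i * w.2.1))
    (hq : ∀ (i : ℕ) (y : ℝ), HasDerivAt (p i) (q i y) y)
    (hσ : (∏ j ∈ Finset.Ico k n, σ j) ≠ 0)
    (d : Fin m → ℝ) (R R' : ℝ → Fin m → ℝ)
    (hR : ∀ y : ℝ, HasDerivAt R (R' y) y)
    (hform : ∀ w : HenonSpace m,
      (compFrom ψ k (n - k) w).2.2
        = (∏ j ∈ Finset.Ico k n, σ j) • (w.2.1 • d + w.2.2 + R w.2.1)) :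
    ∀ y : ℝ,
      ∑ i ∈ Finset.Ico k n, q i ((∏ j ∈ Finset.Ico i n, σ j) * y) = d + R' y := by
  intro y
  set c := ∏ j ∈ Ico k n, σ j
  have hmem : ∀ i ∈ Ico k n, k ≤ i ∧ i ≤ n - 1 := fun i hi => by simp at hi; omega
  have htip : (fun y => c • (y • d + R y)) =
      fun y => ∑ i ∈ Ico k n, (∏ j ∈ Ico k i, σ j) • p i ((∏ j ∈ Ico i n, σ j) * y) := by
    funext y
    simpa using (hform (0, y, 0)).symm.trans <| compFrom_snd_snd_eq_sum
      (fun i hi => hy i (hmem i hi).1 (hmem i hi).2)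
      (fun i hi => hz i (hmem i hi).1 (hmem i hi).2) (0, y, 0)
  have hlhs : HasDerivAt (fun y => c • (y • d + R y)) (c • (d + R' y)) y := by
    have := (((hasDerivAt_id' y).smul_const d).add (hR y)).const_smul c
    rwa [one_smul] at this
  have hrhs := hasDerivAt_sum_smul_comp_mul (Ico k n) (fun i => ∏ j ∈ Ico k i, σ j)
    (fun i => ∏ j ∈ Ico i n, σ j) hq y
  have hsplit : ∀ i ∈ Ico k n, (∏ j ∈ Ico k i, σ j) * ∏ j ∈ Ico i n, σ j = c :=
    fun i hi => prod_Ico_consecutive σ (hmem i hi).1 (mem_Ico.1 hi).2.le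
  rw [← htip, sum_congr rfl fun i hi => by rw [hsplit i hi], ← smul_sum] at hrhs
  exact smul_right_injective _ hσ (hrhs.unique hlhs)

/-- Corollary 5.4 of the paper: `Σ_{i=k}^{n−1} q_i(σ_{n,i}·y) = d_{n,k} + R'_{n,k}(y)`. -/
theorem henon_sum_q_eq_d_add_R' {m : ℕ} (hm : 1 ≤ m) (k n : ℕ) (hkn : k < n)
    (ψ : ℕ → HenonSpace m → HenonSpace m) (σ : ℕ → ℝ) (p q : ℕ → ℝ → Fin m → ℝ)
    (hy : ∀ i : ℕ, k ≤ i → i ≤ n - 1 → ∀ w : HenonSpace m,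
      (ψ i w).2.1 = σ i * w.2.1)
    (hz : ∀ i : ℕ, k ≤ i → i ≤ n - 1 → ∀ w : HenonSpace m,
      (ψ i w).2.2 = σ i • w.2.2 + p i (σ i * w.2.1))
    (hq : ∀ (i : ℕ) (y : ℝ), HasDerivAt (p i) (q i y) y)
    (hσ : (∏ j ∈ Finset.Ico k n, σ j) ≠ 0)
    (d : Fin m → ℝ) (R R' : ℝ → Fin m → ℝ)
    (hR : ∀ y : ℝ, HasDerivAt R (R' y) y)
    (hform : ∀ w : HenonSpace m,
      (compFrom ψ k (n - k) w).2.2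
        = (∏ j ∈ Finset.Ico k n, σ j) • (w.2.1 • d + w.2.2 + R w.2.1)) :
    ∀ y : ℝ,
      ∑ i ∈ Finset.Ico k n, q i ((∏ j ∈ Finset.Ico i n, σ j) * y) = d + R' y :=
  henon_sum_q_eq_d_add_R'_general k n ψ σ p q hy hz hq hσ d R R' hR hform
end

section
/- Let X be a set, k < n integers, F_j : X → X maps for k ≤ j ≤ n and ψ^j_v : X → X bijections for k < j ≤ n with F_j = (ψ^j_v)⁻¹ ∘ F_{j−1} ∘ F_{j−1} ∘ ψ^j_v, and set ψ^j_c = F_{j−1} ∘ ψ^j_v, Ψ^n_{k,v} = ψ^{k+1}_v ∘ ⋯ ∘ ψ^n_v, Ψ^n_{k,c} = ψ^{k+1}_c ∘ ⋯ ∘ ψ^n_c. Suppose F_k is injective, and suppose τ_k, τ_n, c_k, c_n ∈ X satisfy Ψ^n_{k,v}(τ_n) = τ_k, F_n(c_n) = τ_n and F_k(c_k) = τ_k. Then Ψ^n_{k,c}(c_n) = c_k. -/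
theorem iterComp_comp_eq_of_comp_eq {α β : Type*} (G : ℕ → α → β) (φ : ℕ → α → α)
    (ψ : ℕ → β → β) (k m : ℕ)
    (hstep : ∀ j, k < j → j ≤ k + m → G (j - 1) ∘ φ j = ψ j ∘ G j) :
    G k ∘ iterComp φ k m = iterComp ψ k m ∘ G (k + m) := by
  induction m with
  | zero => rfl
  | succ m ih =>
    have hlower := ih fun j hkj hj => hstep j hkj (by omega)
    have htop : G (k + m) ∘ φ (k + m + 1) = ψ (k + m + 1) ∘ G (k + m + 1) :=
      hstep (k + m + 1) (by omega) le_rfl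
    calc G k ∘ (iterComp φ k m ∘ φ (k + m + 1))
        = iterComp ψ k m ∘ (G (k + m) ∘ φ (k + m + 1)) := by
          rw [← Function.comp_assoc, hlower, Function.comp_assoc]
      _ = (iterComp ψ k m ∘ ψ (k + m + 1)) ∘ G (k + m + 1) := by
          rw [htop, Function.comp_assoc]

theorem comp_comp_eq_of_eq_symm_comp_sq {X : Type*} (e : X ≃ X) (f g : X → X)
    (h : g = e.symm ∘ f ∘ f ∘ e) : f ∘ (f ∘ e) = e ∘ g :=
  ((Equiv.eq_symm_comp e _ _).mp h).symm

/-- Corollary B.2 of the paper: the critical points satisfy `c_{F_k} = Ψ^n_{k,c}(c_{F_n})`. -/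
theorem henon_critical_point_image {X : Type*} (k n : ℕ) (hkn : k < n)
    (F : ℕ → X → X) (ψv : ℕ → X ≃ X)
    (hF : ∀ j : ℕ, k < j → j ≤ n →
      F j = ⇑(ψv j).symm ∘ F (j - 1) ∘ F (j - 1) ∘ ⇑(ψv j))
    (ψc : ℕ → X → X)
    (hψc : ∀ j : ℕ, ψc j = F (j - 1) ∘ ⇑(ψv j))
    (hinj : Function.Injective (F k))
    (τk τn ck cn : X)
    (hτ : iterComp (fun j => ⇑(ψv j)) k (n - k) τn = τk)
    (hcn : F n cn = τn)
    (hck : F k ck = τk) :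
    iterComp ψc k (n - k) cn = ck := by
  have hladder := iterComp_comp_eq_of_comp_eq F ψc (fun j => ⇑(ψv j)) k (n - k)
    fun j hkj hj => by
      rw [hψc j]
      exact comp_comp_eq_of_eq_symm_comp_sq (ψv j) _ _ (hF j hkj (by omega))
  rw [show k + (n - k) = n by omega] at hladder
  apply hinj
  rw [hck, ← hτ, ← hcn]
  exact congrFun hladder cn
end

section
/- Let σ, b₁, b̃₁ ∈ (0,1) with b₁ > b̃₁, let C > 0 and α > 0. Suppose there are infinitely many positive integers k such that σ^k · b̃₁^{2^k} · b₁^{2^k} ≤ C · (σ^k · b̃₁^{2^k} · b̃₁^{2^k})^α. Then α ≤ (1/2)·(1 + log b₁ / log b̃₁). -/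
/-! Taking logarithms, every admissible scale `k` gives
`2^k (log b̃₁ + log b₁ - 2α log b̃₁) ≤ log C + (α - 1) k log σ`.
Since this holds for infinitely many `k` and `2^k` outgrows any affine function of `k`, the
coefficient of `2^k` is nonpositive; dividing by `log b̃₁ < 0` gives the bound. -/

open Real Filter Asymptotics

theorem nonpos_of_frequently_mul_pow_le_add_mul {r a b c : ℝ} (hr : 1 < r)
    (h : ∃ᶠ n : ℕ in atTop, c * r ^ n ≤ a + b * n) : c ≤ 0 := by
  by_contra! hc
  have hlin : (fun n : ℕ ↦ a + b * n) =o[atTop] fun n ↦ r ^ n :=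
    ((isLittleO_const_left.2 <| .inr <| (tendsto_norm_atTop_atTop.comp
      (tendsto_pow_atTop_atTop_of_one_lt hr)))).add
      ((isLittleO_coe_const_pow_of_one_lt hr).const_mul_left b)
  obtain ⟨n, hn, hsmall⟩ := (h.and_eventually (hlin.def (half_pos hc))).exists
  have hrn : 0 < r ^ n := pow_pos (zero_lt_one.trans hr) n
  rw [Real.norm_eq_abs, Real.norm_of_nonneg hrn.le] at hsmall
  linarith [le_abs_self (a + b * n), mul_pos hc hrn]

theorem log_pow_mul_pow_mul_pow {σ a b : ℝ} (hσ : 0 < σ) (ha : 0 < a) (hb : 0 < b) (k n : ℕ) :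
    log (σ ^ k * a ^ n * b ^ n) = k * log σ + n * (log a + log b) := by
  rw [log_mul (by positivity) (by positivity), log_mul (by positivity) (by positivity),
    log_pow, log_pow, log_pow]
  ring

theorem log_le_log_mul_rpow {x y C α : ℝ} (hx : 0 < x) (hy : 0 < y) (hC : 0 < C)
    (h : x ≤ C * y ^ α) : log x ≤ log C + α * log y := by
  rw [← log_rpow hy, ← log_mul hC.ne' (rpow_pos_of_pos hy α).ne']
  exact log_le_log hx h

theorem henon_nonrigidity_holder_bound_general (σ b₁ bt₁ C α : ℝ)
    (hσ : σ ∈ Set.Ioo (0 : ℝ) 1)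
    (hb₁ : b₁ ∈ Set.Ioo (0 : ℝ) 1)
    (hbt₁ : bt₁ ∈ Set.Ioo (0 : ℝ) 1)
    (hC : 0 < C)
    (hinf : {k : ℕ | 0 < k ∧
        σ ^ k * bt₁ ^ (2 ^ k) * b₁ ^ (2 ^ k)
          ≤ C * (σ ^ k * bt₁ ^ (2 ^ k) * bt₁ ^ (2 ^ k)) ^ α}.Infinite) :
    α ≤ (1 / 2) * (1 + Real.log b₁ / Real.log bt₁) := by
  obtain ⟨hσ₀, -⟩ := hσ
  obtain ⟨hb₀, -⟩ := hb₁
  obtain ⟨hbt₀, hbt₁⟩ := hbt₁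
  have hfreq : ∃ᶠ k : ℕ in atTop, (log bt₁ + log b₁ - 2 * α * log bt₁) * 2 ^ k
      ≤ log C + (α - 1) * log σ * k := by
    refine (Nat.frequently_atTop_iff_infinite.2 hinf).mono fun k hk ↦ ?_
    have hlog := log_le_log_mul_rpow (by positivity) (by positivity) hC hk.2
    rw [log_pow_mul_pow_mul_pow hσ₀ hbt₀ hb₀, log_pow_mul_pow_mul_pow hσ₀ hbt₀ hbt₀] at hlog
    push_cast at hlog
    linear_combination hlog
  have hc := nonpos_of_frequently_mul_pow_le_add_mul one_lt_two hfreq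
  have hlog_bt₁ : log bt₁ < 0 := log_neg hbt₀ hbt₁
  have h2α : 2 * α ≤ (log bt₁ + log b₁) / log bt₁ := (le_div_iff_of_neg hlog_bt₁).2 (by linarith)
  rw [add_div, div_self hlog_bt₁.ne] at h2α
  linarith

/-- Quantitative core of the non-rigidity theorem: if along infinitely many scales `k` the
Hölder inequality `σ^k·b̃₁^{2^k}·b₁^{2^k} ≤ C·(σ^k·b̃₁^{2^k}·b̃₁^{2^k})^α` holds with
`b₁ > b̃₁`, then `α ≤ (1/2)(1 + log b₁ / log b̃₁)`. -/
theorem henon_nonrigidity_holder_bound (σ b₁ bt₁ C α : ℝ)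
    (hσ : σ ∈ Set.Ioo (0 : ℝ) 1)
    (hb₁ : b₁ ∈ Set.Ioo (0 : ℝ) 1)
    (hbt₁ : bt₁ ∈ Set.Ioo (0 : ℝ) 1)
    (hlt : bt₁ < b₁)
    (hC : 0 < C) (hα : 0 < α)
    (hinf : {k : ℕ | 0 < k ∧
        σ ^ k * bt₁ ^ (2 ^ k) * b₁ ^ (2 ^ k)
          ≤ C * (σ ^ k * bt₁ ^ (2 ^ k) * bt₁ ^ (2 ^ k)) ^ α}.Infinite) :
    α ≤ (1 / 2) * (1 + Real.log b₁ / Real.log bt₁) :=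
  henon_nonrigidity_holder_bound_general σ b₁ bt₁ C α hσ hb₁ hbt₁ hC hinf
end

section
/- Given real numbers 0 < A₀ < A₁, 0 < σ < 1 and p ≥ 2, the set of parameters b ∈ [0,1] for which there are infinitely many pairs of integers 0 < k < n satisfying A₀ < b^{p^k}/σ^{n−k} < A₁ is a dense G_δ subset of [0,1] of full Lebesgue measure. -/
open MeasureTheory

/-- The set of parameters `b ∈ [0,1]` admitting infinitely many pairs `0 < k < n` with
`A₀ < b^{p^k}/σ^{n−k} < A₁`. -/
def hlmParamSet (A₀ A₁ σ p : ℝ) : Set ℝ :=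
  {b : ℝ | b ∈ Set.Icc (0 : ℝ) 1 ∧
    {kn : ℕ × ℕ | 0 < kn.1 ∧ kn.1 < kn.2 ∧
      A₀ < b ^ (p ^ kn.1) / σ ^ (kn.2 - kn.1) ∧
      b ^ (p ^ kn.1) / σ ^ (kn.2 - kn.1) < A₁}.Infinite}

/-!
Write `b = exp (-x)` and `L = -log σ`. With `m = n - k`, the condition
`A₀ < b^{p^k}/σ^{n-k} < A₁` says that `p^k x` lies in the gap
`(m L - log A₁, m L - log A₀)`, one gap in each period of length `L`.

For fixed `k` only finitely many `n` qualify, because `σ^{n-k} → 0`; so the parameter set is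
`[0,1] ∩ ⋂_N V_N`, where the open set `V_N` asks for a pair with `k ≥ N`. Hence it is a `G_δ`.

If `x > 0` misses every gap for all `k ≥ N`, then at scale `r = L/p^k` the window `[x-r, x+r]`
contains a whole rescaled gap, of length proportional to `r`. So no such `x` can be a Lebesgue
density point of the set of such points, and that set is null. Its image under `x ↦ exp (-x)`
is null too, so `[0,1] ∖ V_N` is null. A set of full measure in `[0,1]` is dense in `[0,1]`.
-/

open Metric Filter Set Topology Real

theorem subset_closure_of_measure_diff_eq_zero {X : Type*} [TopologicalSpace X]
    [MeasurableSpace X] {μ : Measure X} [μ.IsOpenPosMeasure] {U s : Set X} (hU : IsOpen U)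
    (h : μ (U \ s) = 0) : U ⊆ closure s :=
  sdiff_eq_empty.1 <| (hU.sdiff isClosed_closure).eq_empty_of_measure_zero <|
    measure_mono_null (sdiff_subset_sdiff_right subset_closure) h

theorem Set.infinite_iff_forall_exists_le_fst {β : Type*} {S : Set (ℕ × β)}
    (hS : ∀ k, {b | (k, b) ∈ S}.Finite) : S.Infinite ↔ ∀ N, ∃ x ∈ S, N ≤ x.1 := by
  refine ⟨fun hinf N => ?_, fun h hfin => ?_⟩
  · by_contra! hlt
    refine hinf (((finite_Iio N).biUnion fun k _ => (finite_singleton k).prod (hS k)).subset ?_)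
    rintro ⟨k, b⟩ hkb
    exact mem_biUnion (mem_Iio.2 (hlt _ hkb)) ⟨rfl, hkb⟩
  · obtain ⟨M, hM⟩ := (hfin.image Prod.fst).bddAbove
    obtain ⟨x, hx, hle⟩ := h (M + 1)
    have := hM (mem_image_of_mem _ hx)
    omega

theorem finite_setOf_div_pow_mem_Ioo {A₀ A₁ σ : ℝ} (c : ℝ) (hA₀ : 0 ≤ A₀) (hσ0 : 0 < σ)
    (hσ1 : σ < 1) : {m : ℕ | c / σ ^ m ∈ Ioo A₀ A₁}.Finite := by
  rcases le_or_gt c 0 with hc | hc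
  · exact finite_empty.subset fun m hm =>
      (div_nonpos_of_nonpos_of_nonneg hc (pow_pos hσ0 m).le).not_gt (hA₀.trans_lt hm.1)
  · have hgrow : Tendsto (fun m : ℕ => c / σ ^ m) atTop atTop := by
      simpa only [div_eq_mul_inv, inv_pow] using
        (tendsto_pow_atTop_atTop_of_one_lt ((one_lt_inv₀ hσ0).2 hσ1)).const_mul_atTop hc
    rw [← Nat.cofinite_eq_atTop] at hgrow
    exact (eventually_cofinite.1 (hgrow.eventually_ge_atTop A₁)).subset
      fun m hm => not_le.2 hm.2

theorem exp_neg_div_pow_mem_Ioo {A₀ A₁ σ t : ℝ} (m : ℕ) (hA₀ : 0 < A₀) (hA₁ : 0 < A₁)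
    (hσ0 : 0 < σ) (ht : t ∈ Ioo (m * -log σ + -log A₁) (m * -log σ + -log A₀)) :
    exp (-t) / σ ^ m ∈ Ioo A₀ A₁ := by
  have hpos : 0 < exp (-t) / σ ^ m := div_pos (exp_pos _) (pow_pos hσ0 m)
  have hlog : log (exp (-t) / σ ^ m) = -t - m * log σ := by
    rw [log_div (exp_pos _).ne' (pow_pos hσ0 m).ne', log_exp, log_pow]
  constructor
  · rw [← log_lt_log_iff hA₀ hpos, hlog]
    linarith [ht.2]
  · rw [← log_lt_log_iff hpos hA₁, hlog]
    linarith [ht.1]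

theorem volume_Icc_diff_eq_zero_of_exp_neg {s : Set ℝ}
    (hs : volume {x : ℝ | 0 < x ∧ exp (-x) ∉ s} = 0) : volume (Icc 0 1 \ s) = 0 := by
  have hsub : Icc 0 1 \ s ⊆ {0, 1} ∪ (fun x => exp (-x)) '' {x : ℝ | 0 < x ∧ exp (-x) ∉ s} := by
    rintro b ⟨⟨hb0, hb1⟩, hbs⟩
    rcases hb0.eq_or_lt with rfl | hb0
    · exact Or.inl (Or.inl rfl)
    rcases hb1.eq_or_lt with rfl | hb1
    · exact Or.inl (Or.inr rfl)
    refine Or.inr ⟨-log b, ⟨neg_pos.2 (log_neg hb0 hb1), ?_⟩, ?_⟩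
    · rwa [neg_neg, exp_log hb0]
    · simp only [neg_neg, exp_log hb0]
  exact measure_mono_null hsub <|
    measure_union_null (((countable_singleton 1).insert 0).measure_zero volume)
      (addHaar_image_eq_zero_of_differentiableOn_of_addHaar_eq_zero volume (by fun_prop) hs)

theorem volume_eq_zero_of_frequently_gap {s : Set ℝ} (hs : MeasurableSet s) {δ : ℝ} (hδ : 0 < δ)
    (h : ∀ x ∈ s, ∃ᶠ r in 𝓝[>] 0, ∃ y, Ioo y (y + δ * r) ⊆ closedBall x r ∧
      Disjoint s (Ioo y (y + δ * r))) :
    volume s = 0 := by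
  by_contra hs0
  have : NeBot (ae (volume.restrict s)) := ae_neBot.2 (by simpa using hs0)
  obtain ⟨x, hxs, hx⟩ :=
    ((ae_restrict_mem hs).and (Besicovitch.ae_tendsto_measure_inter_div volume s)).exists
  have hdensity : Tendsto (fun r => volume.real (s ∩ closedBall x r) /
      volume.real (closedBall x r)) (𝓝[>] 0) (𝓝 1) := by
    simpa only [Function.comp_def, ENNReal.toReal_div, measureReal_def, ENNReal.toReal_one]
      using (ENNReal.tendsto_toReal ENNReal.one_ne_top).comp hx
  obtain ⟨r, ⟨y, hsub, hdisj⟩, hdense, hr : 0 < r⟩ := ((h x hxs).and_eventually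
    ((hdensity.eventually (eventually_gt_nhds (by linarith : 1 - δ / 2 < 1))).and
      self_mem_nhdsWithin)).exists
  have hball : volume.real (closedBall x r) = 2 * r := Real.volume_real_closedBall hr.le
  have hsum : volume.real (s ∩ closedBall x r) + δ * r ≤ 2 * r := by
    have hfin : volume (s ∩ closedBall x r) ≠ ⊤ :=
      ((measure_mono inter_subset_right).trans_lt measure_closedBall_lt_top).ne
    rw [← hball, ← add_sub_cancel_left y (δ * r), ← Real.volume_real_Ioo_of_le (by nlinarith),
      ← measureReal_union (hdisj.mono_left inter_subset_left) measurableSet_Ioo hfin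
        measure_Ioo_lt_top.ne]
    exact measureReal_mono (union_subset inter_subset_right hsub) measure_closedBall_lt_top.ne
  rw [hball, lt_div_iff₀ (by positivity)] at hdense
  nlinarith

theorem exists_nat_gap_subset_Icc {L u v t : ℝ} (hL : 0 < L) (hvu : v - u ≤ L) (ht : L + u < t) :
    ∃ m : ℕ, 1 ≤ m ∧ t - L ≤ m * L + u ∧ m * L + v ≤ t + L := by
  have hpos : 0 < (t - L - u) / L := div_pos (by linarith) hL
  refine ⟨⌈(t - L - u) / L⌉₊, Nat.one_le_iff_ne_zero.2 (Nat.ceil_pos.2 hpos).ne', ?_, ?_⟩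
  · have := (div_le_iff₀ hL).1 (Nat.le_ceil ((t - L - u) / L))
    linarith
  · have := (lt_div_iff₀ hL).1 (by linarith [Nat.ceil_lt_add_one hpos.le] :
      (⌈(t - L - u) / L⌉₊ : ℝ) - 1 < (t - L - u) / L)
    rw [sub_mul, one_mul] at this
    linarith

theorem volume_setOf_forall_notMem_gap {p L u v : ℝ} (hp : 1 < p) (hL : 0 < L) (huv : u < v)
    (K : ℕ) :
    volume {x : ℝ | 0 < x ∧ ∀ k ≥ K, ∀ m : ℕ, 1 ≤ m →
      p ^ k * x ∉ Ioo (m * L + u) (m * L + v)} = 0 := by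
  -- shrunk to length at most `L`, a gap fits into every window of length `2 L`
  set w := max u (v - L)
  have hwv : w < v := max_lt huv (by linarith)
  refine volume_eq_zero_of_frequently_gap (by measurability) (div_pos (sub_pos.2 hwv) hL)
    fun x hx => ?_
  have hpk : ∀ k : ℕ, 0 < p ^ k := fun k => pow_pos (zero_lt_one.trans hp) k
  have hr : Tendsto (fun k : ℕ => L / p ^ k) atTop (𝓝[>] 0) :=
    tendsto_nhdsWithin_of_tendsto_nhds_of_eventually_within _
      (tendsto_const_nhds.div_atTop (tendsto_pow_atTop_atTop_of_one_lt hp))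
      (Eventually.of_forall fun k => div_pos hL (hpk k))
  refine hr.frequently (Eventually.frequently ?_)
  filter_upwards [eventually_ge_atTop K,
    ((tendsto_pow_atTop_atTop_of_one_lt hp).atTop_mul_const hx.1).eventually_gt_atTop (L + w)]
    with k hkK hkx
  obtain ⟨m, hm, hlo, hhi⟩ :=
    exists_nat_gap_subset_Icc (v := v) hL (by linarith [le_max_right u (v - L)]) hkx
  have hend : (m * L + w) / p ^ k + (v - w) / L * (L / p ^ k) = (m * L + v) / p ^ k := by
    field_simp
    ring
  refine ⟨(m * L + w) / p ^ k, ?_, ?_⟩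
  · rw [hend, Real.closedBall_eq_Icc]
    refine Ioo_subset_Icc_self.trans (Icc_subset_Icc ?_ ?_)
    · rw [le_div_iff₀ (hpk k), sub_mul, div_mul_cancel₀ _ (hpk k).ne']
      linarith [mul_comm x (p ^ k)]
    · rw [div_le_iff₀ (hpk k), add_mul, div_mul_cancel₀ _ (hpk k).ne']
      linarith [mul_comm x (p ^ k)]
  · rw [hend, Set.disjoint_left]
    rintro z hz ⟨hz₁, hz₂⟩
    refine hz.2 k hkK m hm ⟨?_, ?_⟩
    · rw [div_lt_iff₀' (hpk k)] at hz₁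
      linarith [le_max_left u (v - L)]
    · rwa [lt_div_iff₀' (hpk k)] at hz₂

def hlmPairs (A₀ A₁ σ p b : ℝ) : Set (ℕ × ℕ) :=
  {kn | 0 < kn.1 ∧ kn.1 < kn.2 ∧
    A₀ < b ^ (p ^ kn.1) / σ ^ (kn.2 - kn.1) ∧ b ^ (p ^ kn.1) / σ ^ (kn.2 - kn.1) < A₁}

def hlmTail (A₀ A₁ σ p : ℝ) (N : ℕ) : Set ℝ :=
  {b | ∃ kn ∈ hlmPairs A₀ A₁ σ p b, N ≤ kn.1}

section

variable {A₀ A₁ σ p : ℝ}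

theorem finite_hlmPairs_fiber (b : ℝ) (hA₀ : 0 ≤ A₀) (hσ0 : 0 < σ) (hσ1 : σ < 1) (k : ℕ) :
    {n | (k, n) ∈ hlmPairs A₀ A₁ σ p b}.Finite := by
  refine ((finite_setOf_div_pow_mem_Ioo (A₁ := A₁) (b ^ (p ^ k)) hA₀ hσ0 hσ1).image
    (· + k)).subset ?_
  rintro n ⟨-, hkn, hratio⟩
  exact ⟨n - k, hratio, Nat.sub_add_cancel hkn.le⟩

theorem hlmParamSet_eq_inter_iInter_hlmTail (hA₀ : 0 ≤ A₀) (hσ0 : 0 < σ) (hσ1 : σ < 1) :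
    hlmParamSet A₀ A₁ σ p = Icc 0 1 ∩ ⋂ N, hlmTail A₀ A₁ σ p N := by
  ext b
  rw [mem_inter_iff, mem_iInter]
  exact and_congr_right fun _ =>
    infinite_iff_forall_exists_le_fst (finite_hlmPairs_fiber b hA₀ hσ0 hσ1)

theorem isOpen_hlmTail (hp : 0 ≤ p) (N : ℕ) : IsOpen (hlmTail A₀ A₁ σ p N) := by
  rw [hlmTail, ofPred_exists]
  refine isOpen_iUnion fun kn => IsOpen.and ?_ isOpen_const
  have hratio : Continuous fun b : ℝ => b ^ (p ^ kn.1) / σ ^ (kn.2 - kn.1) :=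
    (continuous_rpow_const (pow_nonneg hp _)).div_const _
  exact isOpen_const.and <| isOpen_const.and <|
    (isOpen_lt continuous_const hratio).and (isOpen_lt hratio continuous_const)

theorem volume_Icc_diff_hlmTail (hA₀ : 0 < A₀) (hA : A₀ < A₁) (hσ0 : 0 < σ) (hσ1 : σ < 1)
    (hp : 1 < p) (N : ℕ) : volume (Icc 0 1 \ hlmTail A₀ A₁ σ p N) = 0 := by
  refine volume_Icc_diff_eq_zero_of_exp_neg <| measure_mono_null ?_ <|
    volume_setOf_forall_notMem_gap hp (neg_pos.2 (log_neg hσ0 hσ1))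
      (neg_lt_neg (log_lt_log hA₀ hA)) (max N 1)
  rintro x ⟨hx, hxT⟩
  refine ⟨hx, fun k hk m hm hgap => hxT ⟨(k, k + m), ?_, le_of_max_le_left hk⟩⟩
  have hratio : exp (-x) ^ p ^ k / σ ^ (k + m - k) ∈ Ioo A₀ A₁ := by
    rw [← exp_mul, Nat.add_sub_cancel_left, neg_mul, mul_comm]
    exact exp_neg_div_pow_mem_Ioo m hA₀ (hA₀.trans hA) hσ0 hgap
  exact ⟨le_of_max_le_right hk, by omega, hratio⟩

end

/-- Theorem of Hazard–Lyubich–Martens: the set of parameters `b ∈ [0,1]` with infinitely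
many `0 < k < n` satisfying `A₀ < b^{p^k}/σ^{n−k} < A₁` is a dense `G_δ` subset of `[0,1]`
of full Lebesgue measure. -/
theorem hlm_dense_Gdelta_full_measure (A₀ A₁ σ p : ℝ)
    (hA₀ : 0 < A₀) (hA : A₀ < A₁) (hσ0 : 0 < σ) (hσ1 : σ < 1) (hp : 2 ≤ p) :
    IsGδ (hlmParamSet A₀ A₁ σ p)
    ∧ Set.Icc (0 : ℝ) 1 ⊆ closure (hlmParamSet A₀ A₁ σ p)
    ∧ volume (Set.Icc (0 : ℝ) 1 \ hlmParamSet A₀ A₁ σ p) = 0 := by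
  have hS := hlmParamSet_eq_inter_iInter_hlmTail (A₁ := A₁) (p := p) hA₀.le hσ0 hσ1
  have hnull : volume (Icc 0 1 \ hlmParamSet A₀ A₁ σ p) = 0 := by
    rw [hS, sdiff_self_inter, sdiff_iInter, measure_iUnion_null_iff]
    exact volume_Icc_diff_hlmTail hA₀ hA hσ0 hσ1 (by linarith)
  refine ⟨?_, ?_, hnull⟩
  · rw [hS]
    exact isClosed_Icc.isGδ.inter (.iInter fun N => (isOpen_hlmTail (by linarith) N).isGδ)
  · rw [← closure_Ioo zero_ne_one]
    exact closure_minimal (subset_closure_of_measure_diff_eq_zero isOpen_Ioo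
      (measure_mono_null (sdiff_subset_sdiff_left Ioo_subset_Icc_self) hnull)) isClosed_closure
end
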